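/- arXiv:1707.09956 — 3 statements merged into one kernel-verified Lean document; each statement's English description precedes it below -/
import Mathlib

section
/- There is an absolute constant C > 0 such that for every integer n ≥ 1 and every interval I ⊆ [0, 1/2], one has | ∫_I sin(2π(2n−1)x)/sin(2πx) dx | ≤ C. -/
/-!
The kernel expands as `sin ((2n-1)u) / sin u = 1 + 2 ∑_{k=1}^{n-1} cos (2ku)`, so the integral over
`[a, b]` is `b - a + (S (4πb) - S (4πa)) / (2π)` with `S θ = ∑_{k=1}^{n-1} sin (kθ) / k`, a partial
sum of the sawtooth Fourier series. These partial sums are bounded by `1 + 2π` uniformly in `n` and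
`θ`: by periodicity and oddness we may take `0 < θ ≤ π`; the terms with `k ≤ 1/θ` are each at most
`θ`, and Abel summation against `|∑_{k<j} sin (kθ)| ≤ 1 / sin (θ/2) ≤ π/θ` bounds the rest by `2π`.
-/

open Real Finset MeasureTheory

theorem abs_sum_Ico_mul_le_of_antitoneOn {a w : ℕ → ℝ} {B : ℝ} {m : ℕ}
    (ha : ∀ j, |∑ k ∈ range j, a k| ≤ B) (hw : AntitoneOn w (Set.Ici m))
    (hw0 : ∀ k ≥ m, 0 ≤ w k) (n : ℕ) :
    |∑ k ∈ Ico m n, a k * w k| ≤ 2 * B * w m := by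
  have hB : 0 ≤ B := by simpa using ha 0
  rcases lt_or_ge n m with hnm | hmn
  · rw [Ico_eq_empty_of_le hnm.le, sum_empty, abs_zero]
    have := hw0 m le_rfl
    positivity
  set A := fun j => ∑ k ∈ range j, a k
  have abel : ∀ n ≥ m,
      |∑ k ∈ Ico m n, a k * w k - A n * w n + A m * w m| ≤ B * (w m - w n) := by
    refine Nat.le_induction (by simp) fun n hmn ih => ?_
    have hdec : w (n + 1) ≤ w n := hw (Set.mem_Ici.2 hmn)
      (Set.mem_Ici.2 (hmn.trans n.le_succ)) n.le_succ
    have step : ∑ k ∈ Ico m (n + 1), a k * w k - A (n + 1) * w (n + 1) + A m * w m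
        = (∑ k ∈ Ico m n, a k * w k - A n * w n + A m * w m) + A (n + 1) * (w n - w (n + 1)) := by
      simp only [A, sum_Ico_succ_top hmn, sum_range_succ]
      ring
    calc _ ≤ B * (w m - w n) + B * (w n - w (n + 1)) := by
          rw [step]
          refine (abs_add_le _ _).trans (add_le_add ih ?_)
          rw [abs_mul, abs_of_nonneg (sub_nonneg.2 hdec)]
          exact mul_le_mul_of_nonneg_right (ha _) (sub_nonneg.2 hdec)
      _ = B * (w m - w (n + 1)) := by ring
  have hwn := hw0 n hmn
  have hwm := hw0 m le_rfl
  have split : ∑ k ∈ Ico m n, a k * w k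
      = (∑ k ∈ Ico m n, a k * w k - A n * w n + A m * w m) + A n * w n + -(A m * w m) := by ring
  calc |∑ k ∈ Ico m n, a k * w k|
      ≤ |∑ k ∈ Ico m n, a k * w k - A n * w n + A m * w m| + |A n| * w n + |A m| * w m := by
        nth_rewrite 1 [split]
        refine (abs_add_three _ _ _).trans_eq ?_
        rw [abs_neg, abs_mul, abs_mul, abs_of_nonneg hwn, abs_of_nonneg hwm]
    _ ≤ B * (w m - w n) + B * w n + B * w m := by
        gcongr
        exacts [abel n hmn, ha n, ha m]
    _ = 2 * B * w m := by ring

theorem two_mul_sin_half_mul_sum_range_sin (θ : ℝ) (n : ℕ) :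
    2 * sin (θ / 2) * ∑ k ∈ range n, sin (k * θ) = cos (θ / 2) - cos ((2 * n - 1) * θ / 2) := by
  induction n with
  | zero => simp [neg_div, cos_neg]
  | succ n ih =>
    have e₁ : θ / 2 - n * θ = -((2 * n - 1) * θ / 2) := by ring
    have e₂ : θ / 2 + n * θ = (2 * (n + 1 : ℕ) - 1) * θ / 2 := by push_cast; ring
    rw [sum_range_succ, mul_add, ih, two_mul_sin_mul_sin, e₁, e₂, cos_neg]
    ring

theorem abs_sin_half_mul_abs_sum_range_sin_le (θ : ℝ) (n : ℕ) :
    |sin (θ / 2)| * |∑ k ∈ range n, sin (k * θ)| ≤ 1 := by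
  have h := congrArg abs (two_mul_sin_half_mul_sum_range_sin θ n)
  rw [abs_mul, abs_mul, abs_two] at h
  have := (abs_sub _ _).trans (add_le_add (abs_cos_le_one (θ / 2))
    (abs_cos_le_one ((2 * n - 1) * θ / 2)))
  linarith

theorem abs_sin_half_mul_abs_sum_Ico_sin_nat_mul_div_le (θ : ℝ) {m : ℕ} (hm : 1 ≤ m) (n : ℕ) :
    |sin (θ / 2)| * |∑ k ∈ Ico m n, sin (k * θ) / k| ≤ 2 / m := by
  rcases eq_or_ne (sin (θ / 2)) 0 with h | h
  · rw [h, abs_zero, zero_mul]; positivity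
  have hs := abs_pos.2 h
  have hw : AntitoneOn (fun k : ℕ => (k : ℝ)⁻¹) (Set.Ici m) := fun i hi j _ hij =>
    inv_anti₀ (by exact_mod_cast hm.trans hi) (by exact_mod_cast hij)
  have hpartial : ∀ j, |∑ k ∈ range j, sin (k * θ)| ≤ |sin (θ / 2)|⁻¹ := fun j => by
    rw [← one_div, le_div_iff₀ hs, mul_comm]
    exact abs_sin_half_mul_abs_sum_range_sin_le θ j
  have := abs_sum_Ico_mul_le_of_antitoneOn hpartial hw (fun k _ => by positivity) n
  simp only [← div_eq_mul_inv] at this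
  rw [div_div, le_div_iff₀ (by positivity)] at this
  rw [le_div_iff₀ (by positivity)]
  linarith

theorem abs_sum_Ico_one_sin_nat_mul_div_le_mul_abs (θ : ℝ) (n : ℕ) :
    |∑ k ∈ Ico 1 n, sin (k * θ) / k| ≤ (n - 1 : ℕ) * |θ| := by
  refine (abs_sum_le_sum_abs _ _).trans ?_
  rw [← Nat.card_Ico 1 n, ← nsmul_eq_mul, ← sum_const]
  refine sum_le_sum fun k hk => ?_
  have hk : (0 : ℝ) < k := by exact_mod_cast (mem_Ico.1 hk).1
  rw [abs_div, abs_of_pos hk, div_le_iff₀ hk]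
  calc |sin (k * θ)| ≤ |k * θ| := abs_sin_le_abs
    _ = |θ| * k := by rw [abs_mul, abs_of_pos hk, mul_comm]

theorem abs_sum_Ico_one_sin_nat_mul_div_le_one_add_two_pi_of_mem_Icc {θ : ℝ}
    (hθ : θ ∈ Set.Icc 0 π) (n : ℕ) :
    |∑ k ∈ Ico 1 n, sin (k * θ) / k| ≤ 1 + 2 * π := by
  obtain ⟨hθ0, hθπ⟩ := hθ
  rcases hθ0.eq_or_lt with rfl | hθ0
  · simp only [mul_zero, sin_zero, zero_div, sum_const_zero, abs_zero]; positivity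
  set N := ⌊θ⁻¹⌋₊ + 1
  have hN : 1 < N * θ := by
    push_cast [N]
    calc 1 = θ⁻¹ * θ := (inv_mul_cancel₀ hθ0.ne').symm
      _ < _ := mul_lt_mul_of_pos_right (Nat.lt_floor_add_one θ⁻¹) hθ0
  have head : ∀ n ≤ N, |∑ k ∈ Ico 1 n, sin (k * θ) / k| ≤ 1 := fun n hn => by
    have hn' : ((n - 1 : ℕ) : ℝ) ≤ ⌊θ⁻¹⌋₊ := by exact_mod_cast (by omega : n - 1 ≤ ⌊θ⁻¹⌋₊)
    calc _ ≤ (n - 1 : ℕ) * |θ| := abs_sum_Ico_one_sin_nat_mul_div_le_mul_abs θ n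
      _ ≤ θ⁻¹ * θ := by
        rw [abs_of_pos hθ0]
        exact mul_le_mul_of_nonneg_right (hn'.trans (Nat.floor_le (by positivity))) hθ0.le
      _ = 1 := inv_mul_cancel₀ hθ0.ne'
  rcases le_or_gt n N with hn | hn
  · linarith [head n hn, pi_pos]
  have hsin : θ / π ≤ |sin (θ / 2)| :=
    calc θ / π = 2 / π * (θ / 2) := by ring
      _ ≤ sin (θ / 2) := mul_le_sin (by positivity) (by linarith)
      _ ≤ |sin (θ / 2)| := le_abs_self _
  set T := ∑ k ∈ Ico N n, sin (k * θ) / k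
  have hT : N * θ * |T| ≤ 2 * π := by
    have := (mul_le_mul_of_nonneg_right hsin (abs_nonneg T)).trans
      (abs_sin_half_mul_abs_sum_Ico_sin_nat_mul_div_le θ (Nat.le_add_left 1 _) n)
    rw [div_mul_eq_mul_div, div_le_div_iff₀ pi_pos (by positivity)] at this
    linarith
  rw [← sum_Ico_consecutive _ (Nat.le_add_left 1 _) hn.le]
  refine (abs_add_le _ _).trans (add_le_add (head N le_rfl) ?_)
  nlinarith [abs_nonneg T]

theorem abs_sum_Ico_one_sin_nat_mul_div_le_one_add_two_pi (θ : ℝ) (n : ℕ) :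
    |∑ k ∈ Ico 1 n, sin (k * θ) / k| ≤ 1 + 2 * π := by
  set θ' := toIocMod two_pi_pos (-π) θ
  obtain ⟨hθ'₁, hθ'₂⟩ : θ' ∈ Set.Ioc (-π) (-π + 2 * π) := toIocMod_mem_Ioc _ _ _
  have hperiodic : ∀ k : ℕ, sin (k * θ) = sin (k * θ') := fun k => by
    rw [← toIocMod_add_toIocDiv_zsmul two_pi_pos (-π) θ, zsmul_eq_mul,
      show (k : ℝ) * (θ' + toIocDiv two_pi_pos (-π) θ * (2 * π))
        = k * θ' + ((k * toIocDiv two_pi_pos (-π) θ : ℤ) : ℝ) * (2 * π) by push_cast; ring,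
      sin_add_int_mul_two_pi]
  simp only [hperiodic]
  rcases le_or_gt 0 θ' with h | h
  · exact abs_sum_Ico_one_sin_nat_mul_div_le_one_add_two_pi_of_mem_Icc ⟨h, by linarith⟩ n
  · have := abs_sum_Ico_one_sin_nat_mul_div_le_one_add_two_pi_of_mem_Icc
      (θ := -θ') ⟨by linarith, by linarith⟩ n
    simpa only [mul_neg, sin_neg, neg_div, sum_neg_distrib, abs_neg] using this

theorem sin_two_mul_sub_one_mul_eq (u : ℝ) {n : ℕ} (hn : 1 ≤ n) :
    sin ((2 * n - 1) * u) = sin u * (1 + 2 * ∑ k ∈ Ico 1 n, cos (k * (2 * u))) := by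
  induction n, hn using Nat.le_induction with
  | base => norm_num
  | succ n hn ih =>
    have step : 2 * sin u * cos (n * (2 * u))
        = sin ((2 * (n + 1 : ℕ) - 1) * u) - sin ((2 * n - 1) * u) := by
      rw [two_mul_sin_mul_cos, show u - n * (2 * u) = -((2 * n - 1) * u) by ring, sin_neg,
        show u + n * (2 * u) = (2 * (n + 1 : ℕ) - 1) * u by push_cast; ring]
      ring
    rw [sum_Ico_succ_top hn]
    linear_combination ih - step

theorem ae_sin_mul_two_mul_sub_one_mul_div_sin_eq {c : ℝ} (hc : c ≠ 0) {n : ℕ} (hn : 1 ≤ n) :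
    ∀ᵐ x : ℝ, sin (c * (2 * n - 1) * x) / sin (c * x)
      = 1 + 2 * ∑ k ∈ Ico 1 n, cos (k * (2 * c * x)) := by
  have hzeros : {x : ℝ | sin (c * x) = 0}.Countable := by
    refine (Set.countable_range fun k : ℤ => k * π / c).mono fun x hx => ?_
    obtain ⟨k, hk⟩ := sin_eq_zero_iff.1 hx
    exact ⟨k, by field_simp; linarith⟩
  filter_upwards [measure_eq_zero_iff_ae_notMem.1 (hzeros.measure_zero _)] with x hx
  rw [show c * (2 * n - 1) * x = (2 * n - 1) * (c * x) by ring, sin_two_mul_sub_one_mul_eq _ hn,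
    mul_div_cancel_left₀ _ hx]
  simp only [mul_assoc]

theorem integral_cos_mul {c : ℝ} (hc : c ≠ 0) (a b : ℝ) :
    ∫ x in a..b, cos (c * x) = (sin (c * b) - sin (c * a)) / c := by
  rw [intervalIntegral.integral_comp_mul_left cos hc, integral_cos, smul_eq_mul, inv_mul_eq_div]

theorem integral_one_add_two_mul_sum_cos {c : ℝ} (hc : c ≠ 0) (n : ℕ) (a b : ℝ) :
    ∫ x in a..b, (1 + 2 * ∑ k ∈ Ico 1 n, cos (k * (c * x)))
      = b - a + 2 * (∑ k ∈ Ico 1 n, sin (k * (c * b)) / k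
          - ∑ k ∈ Ico 1 n, sin (k * (c * a)) / k) / c := by
  have hcos : ∀ k : ℕ, Continuous fun x => cos (k * (c * x)) := fun k => by fun_prop
  rw [intervalIntegral.integral_add intervalIntegrable_const
      (Continuous.intervalIntegrable (by fun_prop) a b),
    intervalIntegral.integral_const, intervalIntegral.integral_const_mul,
    intervalIntegral.integral_finsetSum fun k _ => (hcos k).intervalIntegrable a b,
    smul_eq_mul, mul_one, mul_div_assoc, ← sum_sub_distrib, sum_div]
  congr 2
  refine sum_congr rfl fun k hk => ?_
  have hk : (k : ℝ) ≠ 0 := by exact_mod_cast (Nat.one_le_iff_ne_zero.1 (mem_Ico.1 hk).1)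
  simp only [← mul_assoc]
  rw [integral_cos_mul (mul_ne_zero hk hc)]
  field_simp

/-- **Uniform bound on partial integrals of the Dirichlet-type kernel.**
There is an absolute constant `C > 0` such that for every integer `n ≥ 1` and every interval
`I = [a,b] ⊆ [0, 1/2]`, one has `|∫_I sin(2π(2n−1)x)/sin(2πx) dx| ≤ C`. -/
theorem dirichlet_kernel_integral_bound :
    ∃ C : ℝ, 0 < C ∧ ∀ (n : ℕ), 1 ≤ n → ∀ a b : ℝ,
      0 ≤ a → a ≤ b → b ≤ 1 / 2 →
      |∫ x in a..b, Real.sin (2 * π * (2 * (n : ℝ) - 1) * x) / Real.sin (2 * π * x)| ≤ C := by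
  refine ⟨1 / 2 + (1 + 2 * π) / π, by positivity, fun n hn a b ha hab hb => ?_⟩
  rw [intervalIntegral.integral_congr_ae
      ((ae_sin_mul_two_mul_sub_one_mul_div_sin_eq (by positivity) hn).mono fun x h _ => h),
    integral_one_add_two_mul_sum_cos (by positivity), mul_div_mul_left _ _ two_ne_zero]
  set Sb := ∑ k ∈ Ico 1 n, sin (k * (2 * (2 * π) * b)) / k
  set Sa := ∑ k ∈ Ico 1 n, sin (k * (2 * (2 * π) * a)) / k
  have hSb : |Sb| ≤ 1 + 2 * π := abs_sum_Ico_one_sin_nat_mul_div_le_one_add_two_pi _ n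
  have hSa : |Sa| ≤ 1 + 2 * π := abs_sum_Ico_one_sin_nat_mul_div_le_one_add_two_pi _ n
  calc _ ≤ |b - a| + |(Sb - Sa) / (2 * π)| := abs_add_le _ _
    _ = (b - a) + |Sb - Sa| / (2 * π) := by
        rw [abs_div, abs_of_pos two_pi_pos, abs_of_nonneg (sub_nonneg.2 hab)]
    _ ≤ 1 / 2 + 2 * (1 + 2 * π) / (2 * π) := by
        gcongr
        · linarith
        · exact (abs_sub _ _).trans (by linarith)
    _ = 1 / 2 + (1 + 2 * π) / π := by rw [mul_div_mul_left _ _ two_ne_zero]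
end

section
/- Define K_{SO(2n)}(x,y) := s_{2n−1}(x−y) + s_{2n−1}(x+y), where s_m(t) := sin(πmt)/sin(πt) (extended by continuity, with s_m(0) = m). There is an absolute constant C > 0 such that for every integer n ≥ 1 and every interval I ⊆ [0, 1/2]: ∫_{[0,1/2]∖I} ∫_I K_{SO(2n)}(x,y)² dx dy ≤ C·log(2 + 2n·|I|). -/
open Real MeasureTheory

/-- `sKer m t = sin (π m t) / sin (π t)`, extended by continuity where `sin (π t) = 0`
(at an integer `t = k` the continuous extension has value `m·cos(πmk)/cos(πk)`, which equals
`m·cos(πmt)·cos(πt)` there; in particular `sKer m 0 = m`). -/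
noncomputable def sKer (m : ℕ) (t : ℝ) : ℝ :=
  if Real.sin (π * t) = 0 then (m : ℝ) * Real.cos (π * m * t) * Real.cos (π * t)
  else Real.sin (π * m * t) / Real.sin (π * t)

/-- The determinantal kernel of the nontrivial eigenangles of a Haar-random matrix in `SO(2n)`:
`K_{SO(2n)}(x,y) = s_{2n−1}(x−y) + s_{2n−1}(x+y)`. -/
noncomputable def KSOEven (n : ℕ) (x y : ℝ) : ℝ :=
  sKer (2 * n - 1) (x - y) + sKer (2 * n - 1) (x + y)

/-!
On `[0, 1/2]²` the square of the kernel is dominated by Lorentzian bumps `M² / (1 + M² u²)`,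
`M = 2 (2n - 1)`, centred at `y`, `-y` and `1 - y`: `|s_m t| ≤ m`, and
`|s_m t| ≤ 1 / |sin (π t)| ≤ 1 / (2 |t|)` for `|t| ≤ 1/2`. The integral of such a bump over `I`
is a difference of arctangents, and for `p ≥ 0` the integral of `arctan (u + ℓ) - arctan u`
over `[p, q]` telescopes to `∫_q^{q+ℓ} arctan - ∫_p^{p+ℓ} arctan`, which is at most
`ℓ π/2 - ∫_0^ℓ arctan = ℓ (π/2 - arctan ℓ) + log (1 + ℓ²) / 2 ≤ 1 + log (1 + ℓ)`;
here `ℓ = M |I|`.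
-/

open Set

lemma abs_sin_nat_mul_le (m : ℕ) (θ : ℝ) : |sin (m * θ)| ≤ m * |sin θ| := by
  induction m with
  | zero => simp
  | succ k ih =>
    push_cast
    rw [add_mul, one_mul, sin_add]
    calc |sin (k * θ) * cos θ + cos (k * θ) * sin θ|
        ≤ |sin (k * θ)| * |cos θ| + |cos (k * θ)| * |sin θ| := by
          simpa only [abs_mul] using abs_add_le (sin (k * θ) * cos θ) (cos (k * θ) * sin θ)
      _ ≤ k * |sin θ| * 1 + 1 * |sin θ| := by
          gcongr <;> exact abs_cos_le_one _
      _ = (k + 1) * |sin θ| := by ring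

lemma abs_sKer_le (m : ℕ) (t : ℝ) : |sKer m t| ≤ m := by
  unfold sKer
  split_ifs with h
  · rw [abs_mul, abs_mul, Nat.abs_cast]
    calc (m : ℝ) * |cos (π * m * t)| * |cos (π * t)| ≤ m * 1 * 1 := by
          gcongr <;> exact abs_cos_le_one _
      _ = m := by ring
  · rw [abs_div, div_le_iff₀ (abs_pos.mpr h), show π * m * t = m * (π * t) by ring]
    exact abs_sin_nat_mul_le m (π * t)

lemma abs_sKer_mul_abs_sin_le_one (m : ℕ) (t : ℝ) : |sKer m t| * |sin (π * t)| ≤ 1 := by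
  unfold sKer
  split_ifs with h
  · simp [h]
  · rw [abs_div, div_mul_cancel₀ _ (abs_ne_zero.mpr h)]
    exact abs_sin_le_one _

lemma two_mul_abs_le_abs_sin_pi_mul {u : ℝ} (hu : |u| ≤ 1 / 2) : 2 * |u| ≤ |sin (π * u)| := by
  have hπu : |π * u| ≤ π / 2 := by
    rw [abs_mul, abs_of_pos pi_pos]
    nlinarith [pi_pos]
  have := mul_abs_le_abs_sin hπu
  rwa [abs_mul, abs_of_pos pi_pos, ← mul_assoc, div_mul_cancel₀ _ pi_ne_zero] at this

noncomputable def lorentzian (M t : ℝ) : ℝ := M ^ 2 / (1 + (M * t) ^ 2)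

lemma lorentzian_nonneg (M t : ℝ) : 0 ≤ lorentzian M t := by
  unfold lorentzian
  positivity

@[fun_prop]
lemma continuous_lorentzian (M : ℝ) : Continuous (lorentzian M) :=
  continuous_const.div (by fun_prop) fun t => by positivity

lemma sKer_sq_le_lorentzian {m : ℕ} {t u : ℝ} (h : 2 * |u| ≤ |sin (π * t)|) :
    sKer m t ^ 2 ≤ lorentzian (2 * m) u / 2 := by
  have h_sup : sKer m t ^ 2 ≤ (m : ℝ) ^ 2 := by
    simpa only [sq_abs] using pow_le_pow_left₀ (abs_nonneg _) (abs_sKer_le m t) 2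
  have h_decay : sKer m t ^ 2 * (2 * u) ^ 2 ≤ 1 := by
    have h' : |sKer m t| * (2 * |u|) ≤ 1 :=
      (mul_le_mul_of_nonneg_left h (abs_nonneg _)).trans (abs_sKer_mul_abs_sin_le_one m t)
    have := pow_le_one₀ (by positivity) h' (n := 2)
    rwa [mul_pow, mul_pow, sq_abs, sq_abs, ← mul_pow] at this
  unfold lorentzian
  rw [div_div, le_div_iff₀ (by positivity)]
  nlinarith [mul_le_mul_of_nonneg_left h_decay (sq_nonneg (m : ℝ))]

/-- `s_m (x + y)` peaks both at `x + y = 0` and at `x + y = 1`; these peaks are carried by the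
images `-y` and `1 - y` of `y`. -/
noncomputable def foldedLorentzian (M x y : ℝ) : ℝ :=
  lorentzian M (x - y) + lorentzian M (x - -y) + lorentzian M (x - (1 - y))

lemma sKer_sub_add_sKer_add_sq_le (m : ℕ) {x y : ℝ} (hx : x ∈ Icc (0 : ℝ) (1 / 2))
    (hy : y ∈ Icc (0 : ℝ) (1 / 2)) :
    (sKer m (x - y) + sKer m (x + y)) ^ 2 ≤ foldedLorentzian (2 * m) x y := by
  obtain ⟨hx₀, hx₁⟩ := hx
  obtain ⟨hy₀, hy₁⟩ := hy
  have h_sub : sKer m (x - y) ^ 2 ≤ lorentzian (2 * m) (x - y) / 2 :=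
    sKer_sq_le_lorentzian (two_mul_abs_le_abs_sin_pi_mul (abs_le.mpr ⟨by linarith, by linarith⟩))
  have h_add : sKer m (x + y) ^ 2 ≤
      (lorentzian (2 * m) (x - -y) + lorentzian (2 * m) (x - (1 - y))) / 2 := by
    have h₀ := lorentzian_nonneg (2 * m) (x - -y)
    have h₁ := lorentzian_nonneg (2 * m) (x - (1 - y))
    rcases le_total (x + y) (1 / 2) with h | h
    · have := sKer_sq_le_lorentzian (m := m)
        (two_mul_abs_le_abs_sin_pi_mul (u := x + y) (abs_le.mpr ⟨by linarith, h⟩))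
      rw [sub_neg_eq_add]
      linarith
    · have hsin : |sin (π * (x - (1 - y)))| = |sin (π * (x + y))| := by
        rw [show π * (x - (1 - y)) = π * (x + y) - π by ring, sin_sub_pi, abs_neg]
      have := sKer_sq_le_lorentzian (m := m) (hsin ▸ two_mul_abs_le_abs_sin_pi_mul
        (u := x - (1 - y)) (abs_le.mpr ⟨by linarith, by linarith⟩))
      linarith
  unfold foldedLorentzian
  nlinarith [sq_nonneg (sKer m (x - y) - sKer m (x + y))]

lemma integral_lorentzian_sub (M a b c : ℝ) :
    ∫ x in a..b, lorentzian M (x - c) = M * (arctan (M * (b - c)) - arctan (M * (a - c))) := by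
  have hderiv : ∀ x ∈ uIcc a b,
      HasDerivAt (fun x => M * arctan (M * (x - c))) (lorentzian M (x - c)) x := by
    intro x _
    refine (((hasDerivAt_arctan _).comp x
      (((hasDerivAt_id' x).sub_const c).const_mul M)).const_mul M).congr_deriv ?_
    rw [lorentzian]
    field_simp
  rw [intervalIntegral.integral_eq_sub_of_hasDerivAt hderiv
    (((continuous_lorentzian M).comp (continuous_sub_right c)).intervalIntegrable _ _)]
  ring

lemma integral_arctan (a b : ℝ) :
    ∫ u in a..b, arctan u
      = (b * arctan b - log (1 + b ^ 2) / 2) - (a * arctan a - log (1 + a ^ 2) / 2) := by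
  have hderiv : ∀ u ∈ uIcc a b,
      HasDerivAt (fun u => u * arctan u - log (1 + u ^ 2) / 2) (arctan u) u := by
    intro u _
    refine (((hasDerivAt_id' u).mul (hasDerivAt_arctan u)).sub
      ((((hasDerivAt_pow 2 u).const_add 1).log (by positivity)).div_const 2)).congr_deriv ?_
    field_simp
    ring
  exact intervalIntegral.integral_eq_sub_of_hasDerivAt hderiv
    (continuous_arctan.intervalIntegrable _ _)

lemma mul_pi_div_two_sub_arctan_le_one {x : ℝ} (hx : 0 ≤ x) : x * (π / 2 - arctan x) ≤ 1 := by
  rcases hx.eq_or_lt with rfl | hx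
  · simp
  have harctan : arctan x⁻¹ ≤ x⁻¹ :=
    (le_tan (arctan_nonneg.mpr (inv_nonneg.mpr hx.le)) (arctan_lt_pi_div_two _)).trans_eq
      (tan_arctan _)
  rw [← arctan_inv_of_pos hx]
  calc x * arctan x⁻¹ ≤ x * x⁻¹ := mul_le_mul_of_nonneg_left harctan hx.le
    _ = 1 := mul_inv_cancel₀ hx.ne'

lemma integral_arctan_add_sub_arctan_le {ℓ p : ℝ} (hℓ : 0 ≤ ℓ) (hp : 0 ≤ p) (q : ℝ) :
    ∫ u in p..q, (arctan (u + ℓ) - arctan u) ≤ 1 + log (1 + ℓ) := by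
  have hint : ∀ a b : ℝ, IntervalIntegrable arctan volume a b :=
    continuous_arctan.intervalIntegrable
  have hint_shift : ∀ d a b : ℝ, IntervalIntegrable (fun u => arctan (u + d)) volume a b :=
    fun d => (by fun_prop : Continuous fun u => arctan (u + d)).intervalIntegrable
  have h_telescope : ∫ u in p..q, (arctan (u + ℓ) - arctan u)
      = (∫ u in q..q + ℓ, arctan u) - ∫ u in p..p + ℓ, arctan u := by
    rw [intervalIntegral.integral_sub (hint_shift ℓ p q) (hint p q),
      intervalIntegral.integral_comp_add_right arctan ℓ,
      intervalIntegral.integral_interval_sub_interval_comm' (hint _ _) (hint _ _) (hint _ _)]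
  have h_upper : ∫ u in q..q + ℓ, arctan u ≤ π / 2 * ℓ := by
    calc ∫ u in q..q + ℓ, arctan u ≤ ∫ _ in q..q + ℓ, π / 2 :=
          intervalIntegral.integral_mono_on (by linarith) (hint _ _) intervalIntegrable_const
            fun u _ => (arctan_lt_pi_div_two u).le
      _ = π / 2 * ℓ := by rw [intervalIntegral.integral_const, smul_eq_mul]; ring
  have h_lower : ∫ u in (0 : ℝ)..ℓ, arctan u ≤ ∫ u in p..p + ℓ, arctan u := by
    have h_shift := intervalIntegral.integral_comp_add_right arctan p (a := 0) (b := ℓ)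
    rw [zero_add, add_comm ℓ] at h_shift
    rw [← h_shift]
    exact intervalIntegral.integral_mono_on hℓ (hint _ _) (hint_shift p _ _)
      fun u _ => arctan_strictMono.monotone (by linarith)
  have h_log : log (1 + ℓ ^ 2) ≤ 2 * log (1 + ℓ) :=
    calc log (1 + ℓ ^ 2) ≤ log ((1 + ℓ) ^ 2) := log_le_log (by positivity) (by nlinarith)
      _ = 2 * log (1 + ℓ) := by rw [log_pow]; norm_num
  rw [integral_arctan, arctan_zero, zero_pow two_ne_zero, add_zero, log_one] at h_lower
  calc ∫ u in p..q, (arctan (u + ℓ) - arctan u)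
      ≤ ℓ * (π / 2 - arctan ℓ) + log (1 + ℓ ^ 2) / 2 := by linarith
    _ ≤ 1 + log (1 + ℓ) := by linarith [mul_pi_div_two_sub_arctan_le_one hℓ]

lemma integral_integral_lorentzian_sub_le {M a b p q : ℝ} (hM : 0 < M) (hab : a ≤ b)
    (hsep : q ≤ a ∨ b ≤ p) :
    ∫ c in p..q, ∫ x in a..b, lorentzian M (x - c) ≤ 1 + log (1 + M * (b - a)) := by
  have hℓ : 0 ≤ M * (b - a) := mul_nonneg hM.le (sub_nonneg.mpr hab)
  set g : ℝ → ℝ := fun u => arctan (u + M * (b - a)) - arctan u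
  simp_rw [integral_lorentzian_sub]
  rcases hsep with hqa | hbp
  · have hg : ∀ c, M * (arctan (M * (b - c)) - arctan (M * (a - c))) = M * g (M * a - M * c) := by
      intro c
      simp only [g]
      rw [show M * a - M * c + M * (b - a) = M * (b - c) by ring, ← mul_sub]
    simp_rw [hg]
    rw [intervalIntegral.integral_const_mul, intervalIntegral.integral_comp_sub_mul g hM.ne',
      smul_eq_mul, mul_inv_cancel_left₀ hM.ne']
    exact integral_arctan_add_sub_arctan_le hℓ
      (sub_nonneg.mpr (mul_le_mul_of_nonneg_left hqa hM.le)) _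
  · have hg : ∀ c, M * (arctan (M * (b - c)) - arctan (M * (a - c))) = M * g (M * c - M * b) := by
      intro c
      simp only [g]
      rw [show M * (b - c) = -(M * c - M * b) by ring,
        show M * (a - c) = -(M * c - M * b + M * (b - a)) by ring, arctan_neg, arctan_neg]
      ring
    simp_rw [hg]
    rw [intervalIntegral.integral_const_mul, intervalIntegral.integral_comp_mul_sub g hM.ne',
      smul_eq_mul, mul_inv_cancel_left₀ hM.ne']
    exact integral_arctan_add_sub_arctan_le hℓ
      (sub_nonneg.mpr (mul_le_mul_of_nonneg_left hbp hM.le)) _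

lemma integral_integral_foldedLorentzian_le {M a b p q : ℝ} (hM : 0 < M) (ha : 0 ≤ a)
    (hab : a ≤ b) (hb : b ≤ 1 / 2) (hp : 0 ≤ p) (hq : q ≤ 1 / 2) (hsep : q ≤ a ∨ b ≤ p) :
    ∫ y in p..q, ∫ x in a..b, foldedLorentzian M x y ≤ 3 * (1 + log (1 + M * (b - a))) := by
  set I : ℝ → ℝ := fun c => ∫ x in a..b, lorentzian M (x - c)
  have hI : Continuous I := by fun_prop
  have hint : ∀ c, IntervalIntegrable (fun x => lorentzian M (x - c)) volume a b := fun c =>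
    ((continuous_lorentzian M).comp (continuous_sub_right c)).intervalIntegrable _ _
  have h_fold : ∀ y, ∫ x in a..b, foldedLorentzian M x y = I y + I (-y) + I (1 - y) := by
    intro y
    simp only [foldedLorentzian, I]
    rw [intervalIntegral.integral_add ((hint _).add (hint _)) (hint _),
      intervalIntegral.integral_add (hint _) (hint _)]
  have h_images : ∫ y in p..q, (I y + I (-y) + I (1 - y))
      = (∫ c in p..q, I c) + (∫ c in -q..-p, I c) + ∫ c in 1 - q..1 - p, I c := by
    have hint' : ∀ f : ℝ → ℝ, Continuous f → IntervalIntegrable f volume p q :=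
      fun f hf => hf.intervalIntegrable p q
    rw [intervalIntegral.integral_add (hint' _ (by fun_prop)) (hint' _ (by fun_prop)),
      intervalIntegral.integral_add (hint' _ hI) (hint' _ (by fun_prop)),
      intervalIntegral.integral_comp_neg, intervalIntegral.integral_comp_sub_left]
  simp_rw [h_fold]
  rw [h_images]
  have h₁ := integral_integral_lorentzian_sub_le hM hab hsep
  have h₂ := integral_integral_lorentzian_sub_le (p := -q) (q := -p) hM hab (.inl (by linarith))
  have h₃ := integral_integral_lorentzian_sub_le (p := 1 - q) (q := 1 - p) hM hab
    (.inr (by linarith))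
  linarith

lemma setIntegral_Icc_sdiff_Icc {E : Type*} [NormedAddCommGroup E] [NormedSpace ℝ E]
    {f : ℝ → E} {p a b q : ℝ} (hf : IntegrableOn f (Icc p q)) (hpa : p ≤ a) (hab : a ≤ b)
    (hbq : b ≤ q) :
    ∫ y in Icc p q \ Icc a b, f y = (∫ y in p..a, f y) + ∫ y in b..q, f y := by
  have hint : ∀ {c d}, p ≤ c → c ≤ d → d ≤ q → IntervalIntegrable f volume c d :=
    fun hc hcd hd => (intervalIntegrable_iff_integrableOn_Icc_of_le hcd).mpr
      (hf.mono_set (Icc_subset_Icc hc hd))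
  rw [setIntegral_sdiff measurableSet_Icc hf (Icc_subset_Icc hpa hbq),
    integral_Icc_eq_integral_Ioc, integral_Icc_eq_integral_Ioc,
    ← intervalIntegral.integral_of_le (hpa.trans (hab.trans hbq)),
    ← intervalIntegral.integral_of_le hab,
    ← intervalIntegral.integral_add_adjacent_intervals (hint le_rfl hpa (hab.trans hbq))
      (hint hpa (hab.trans hbq) le_rfl),
    ← intervalIntegral.integral_add_adjacent_intervals (hint hpa hab hbq)
      (hint (hpa.trans hab) hbq le_rfl)]
  abel

lemma integral_Icc_KSOEven_sq_le {n : ℕ} {a b y : ℝ} (ha : 0 ≤ a) (hab : a ≤ b) (hb : b ≤ 1 / 2)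
    (hy : y ∈ Icc (0 : ℝ) (1 / 2)) :
    ∫ x in Icc a b, KSOEven n x y ^ 2
      ≤ ∫ x in a..b, foldedLorentzian (2 * ((2 * n - 1 : ℕ) : ℝ)) x y := by
  rw [intervalIntegral.integral_of_le hab, ← integral_Icc_eq_integral_Ioc]
  refine integral_mono_of_nonneg (.of_forall fun x => sq_nonneg _)
    (Continuous.integrableOn_Icc (by unfold foldedLorentzian; fun_prop))
    ((ae_restrict_iff' measurableSet_Icc).mpr (.of_forall fun x hx => ?_))
  exact sKer_sub_add_sKer_add_sq_le _ ⟨ha.trans hx.1, hx.2.trans hb⟩ hy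

lemma two_mul_one_add_log_le {M N L : ℝ} (hM : 0 ≤ M) (hMN : M ≤ 2 * N) (hL : 0 ≤ L) :
    2 * (1 + log (1 + M * L)) ≤ 7 * log (2 + N * L) := by
  have hN : 0 ≤ N * L := mul_nonneg (by linarith) hL
  have h_log : log (1 + M * L) ≤ 2 * log (2 + N * L) :=
    calc log (1 + M * L) ≤ log ((2 + N * L) ^ 2) :=
          log_le_log (by positivity) (by nlinarith [mul_le_mul_of_nonneg_right hMN hL])
      _ = 2 * log (2 + N * L) := by rw [log_pow]; norm_num
  have h_log_two : 2 / 3 ≤ log (2 + N * L) :=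
    calc (2 : ℝ) / 3 ≤ log 2 := by linarith [log_two_gt_d9]
      _ ≤ log (2 + N * L) := log_le_log (by norm_num) (by linarith)
  linarith

/-- **Variance bound for eigenvalue counts of `SO(2n)`.** There is an absolute constant
`C > 0` such that for every `n ≥ 1` and every interval `I = [a,b] ⊆ [0,1/2]`:
`∫_{[0,1/2]∖I} ∫_I K_{SO(2n)}(x,y)² dx dy ≤ C·log(2 + 2n·|I|)`. -/
theorem SO_even_offdiagonal_kernel_integral :
    ∃ C : ℝ, 0 < C ∧ ∀ (n : ℕ), 1 ≤ n → ∀ a b : ℝ,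
      0 ≤ a → a ≤ b → b ≤ 1 / 2 →
      (∫ y in Set.Icc (0 : ℝ) (1 / 2) \ Set.Icc a b, ∫ x in Set.Icc a b, (KSOEven n x y) ^ 2)
        ≤ C * Real.log (2 + 2 * (n : ℝ) * (b - a)) := by
  refine ⟨21, by norm_num, fun n hn a b ha hab hb => ?_⟩
  obtain ⟨h_one, h_le⟩ : (1 : ℝ) ≤ ((2 * n - 1 : ℕ) : ℝ) ∧ ((2 * n - 1 : ℕ) : ℝ) ≤ 2 * n :=
    ⟨by norm_cast; omega, by norm_cast; omega⟩
  set M : ℝ := 2 * ((2 * n - 1 : ℕ) : ℝ) with hM_def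
  have hM : 0 < M := by linarith
  set B : ℝ → ℝ := fun y => ∫ x in a..b, foldedLorentzian M x y
  have hB : Continuous B := by unfold B foldedLorentzian; fun_prop
  calc (∫ y in Icc (0 : ℝ) (1 / 2) \ Icc a b, ∫ x in Icc a b, (KSOEven n x y) ^ 2)
      ≤ ∫ y in Icc (0 : ℝ) (1 / 2) \ Icc a b, B y :=
        integral_mono_of_nonneg (.of_forall fun y => integral_nonneg fun x => sq_nonneg _)
          (hB.integrableOn_Icc.mono_set sdiff_subset)
          ((ae_restrict_iff' (measurableSet_Icc.diff measurableSet_Icc)).mpr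
            (.of_forall fun y hy => integral_Icc_KSOEven_sq_le ha hab hb hy.1))
    _ = (∫ y in (0 : ℝ)..a, B y) + ∫ y in b..(1 / 2 : ℝ), B y :=
        setIntegral_Icc_sdiff_Icc hB.integrableOn_Icc ha hab hb
    _ ≤ 3 * (1 + log (1 + M * (b - a))) + 3 * (1 + log (1 + M * (b - a))) := add_le_add
        (integral_integral_foldedLorentzian_le hM ha hab hb le_rfl (by linarith) (.inl le_rfl))
        (integral_integral_foldedLorentzian_le hM ha hab hb (ha.trans hab) le_rfl (.inr le_rfl))
    _ ≤ 21 * log (2 + 2 * (n : ℝ) * (b - a)) := by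
        linarith [two_mul_one_add_log_le hM.le (by linarith) (sub_nonneg.mpr hab) (N := 2 * n)]
end

section
/- Let ψ_k(x) := H_k(x)·e^{−x²/4} / ((2π)^{1/4}·√(k!)), where H_k is the k-th probabilists' Hermite polynomial, and define the GUE kernel K_n(x,y) := ∑_{k=0}^{n−1} ψ_k(x)·ψ_k(y). Fix E ∈ (−2,2) and δ > 0 such that [E−δ, E+δ] ⊂ (−2,2). Then there exists a constant C > 0 (depending only on E and δ) such that for all integers n ≥ 1 and all x, y ∈ [(E−δ)√n, (E+δ)√n]: |K_n(x,y)| ≤ C·√n, and moreover if x ≠ y then |K_n(x,y)| ≤ C/|x−y|. -/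
open Real

/-- The Hermite function `ψ_k(x) = H_k(x)·e^{−x²/4} / ((2π)^{1/4}·√(k!))`, where `H_k` is the
`k`-th probabilists' Hermite polynomial. -/
noncomputable def hermiteFun (k : ℕ) (x : ℝ) : ℝ :=
  (Polynomial.aeval x (Polynomial.hermite k)) * Real.exp (-x ^ 2 / 4) /
    ((2 * π) ^ ((1 : ℝ) / 4) * Real.sqrt (Nat.factorial k))

/-- The `n`-th GUE correlation kernel `K_n(x,y) = ∑_{k=0}^{n−1} ψ_k(x)·ψ_k(y)`. -/
noncomputable def gueKernel (n : ℕ) (x y : ℝ) : ℝ :=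
  ∑ k ∈ Finset.range n, hermiteFun k x * hermiteFun k y

/-!
The Hermite function `ψ_k` solves `ψ_k'' = -(k + 1/2 - x²/4) ψ_k`, so on the oscillatory region
`x² < 4k + 2` Sonin's energy `ψ_k² + ψ_k'² / (k + 1/2 - x²/4)` is monotone in `|x|`. Averaging it
over a window of length `≍ √n` inside the bulk and using `∫ ψ_k² = 1`, `∫ ψ_k'² ≤ k + 1/2` gives
`ψ_k(x)² ≲ n^{-1/2}` and `ψ_k'(x)² ≲ n^{1/2}` for `k ∈ {n - 1, n}`. The Christoffel–Darboux
formula `(x - y) K_n(x,y) = √n (ψ_n(x) ψ_{n-1}(y) - ψ_{n-1}(x) ψ_n(y))`, its confluent form and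
Cauchy–Schwarz turn these into both kernel bounds; the finitely many small `n` are handled by
compactness.
-/

open Polynomial MeasureTheory Set

namespace Polynomial

theorem derivative_hermite_succ (n : ℕ) :
    derivative (hermite (n + 1)) = (n + 1) • hermite n := by
  induction n with
  | zero => simp [hermite_zero]
  | succ n ih =>
    have h : X * (n + 1) • hermite n - (n + 1) • derivative (hermite n)
        = (n + 1) • hermite (n + 1) := by
      rw [hermite_succ n, smul_sub, mul_smul_comm]
    rw [hermite_succ (n + 1), derivative_sub, derivative_mul, derivative_X, one_mul, ih,
      derivative_smul, add_sub_assoc, h]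
    module

theorem aeval_derivative_hermite {A : Type*} [CommRing A] (n : ℕ) (x : A) :
    aeval x (derivative (hermite n)) = n * aeval x (hermite (n - 1)) := by
  cases n with
  | zero => simp [hermite_zero]
  | succ n => rw [derivative_hermite_succ, map_nsmul, nsmul_eq_mul]; push_cast; rfl

theorem aeval_hermite_succ {A : Type*} [CommRing A] (n : ℕ) (x : A) :
    aeval x (hermite (n + 1)) = x * aeval x (hermite n) - n * aeval x (hermite (n - 1)) := by
  rw [hermite_succ, map_sub, map_mul, aeval_X, aeval_derivative_hermite]

theorem hasDerivAt_aeval_hermite {𝕜 : Type*} [NontriviallyNormedField 𝕜] (n : ℕ) (x : 𝕜) :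
    HasDerivAt (fun y : 𝕜 => aeval y (hermite n)) (n * aeval x (hermite (n - 1))) x :=
  aeval_derivative_hermite n x ▸ Polynomial.hasDerivAt_aeval (hermite n) x

theorem integrable_eval_mul_exp_neg_mul_sq (p : ℝ[X]) {b : ℝ} (hb : 0 < b) :
    Integrable fun x : ℝ => p.eval x * Real.exp (-b * x ^ 2) := by
  induction p using Polynomial.induction_on' with
  | add p q hp hq => simp only [eval_add, add_mul]; exact hp.add hq
  | monomial n a =>
    have h := integrable_rpow_mul_exp_neg_mul_sq hb (s := n) (by linarith [n.cast_nonneg (α := ℝ)])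
    simp_rw [Real.rpow_natCast] at h
    simpa [mul_assoc] using h.const_mul a

end Polynomial

noncomputable def hermiteNormConst (k : ℕ) : ℝ :=
  (2 * π) ^ ((1 : ℝ) / 4) * √(Nat.factorial k)

theorem hermiteFun_eq (k : ℕ) (x : ℝ) :
    hermiteFun k x = aeval x (hermite k) * Real.exp (-x ^ 2 / 4) / hermiteNormConst k := rfl

theorem hermiteNormConst_succ (k : ℕ) :
    hermiteNormConst (k + 1) = √(k + 1) * hermiteNormConst k := by
  rw [hermiteNormConst, hermiteNormConst, Nat.factorial_succ, Nat.cast_mul,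
    Real.sqrt_mul (by positivity)]
  push_cast
  ring

theorem hermiteNormConst_zero_sq : hermiteNormConst 0 ^ 2 = √(2 * π) := by
  rw [hermiteNormConst, Nat.factorial_zero, Nat.cast_one, Real.sqrt_one, mul_one,
    ← Real.rpow_natCast, ← Real.rpow_mul (by positivity), Real.sqrt_eq_rpow]
  norm_num

theorem sqrt_succ_mul_hermiteFun_succ_eq (k : ℕ) (x : ℝ) :
    √(k + 1) * hermiteFun (k + 1) x
      = aeval x (hermite (k + 1)) * Real.exp (-x ^ 2 / 4) / hermiteNormConst k := by
  have : √((k : ℝ) + 1) ≠ 0 := by positivity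
  rw [hermiteFun_eq, hermiteNormConst_succ]
  field_simp

theorem sqrt_mul_hermiteFun_pred_eq (k : ℕ) (x : ℝ) :
    √k * hermiteFun (k - 1) x
      = k * aeval x (hermite (k - 1)) * Real.exp (-x ^ 2 / 4) / hermiteNormConst k := by
  cases k with
  | zero => simp
  | succ k =>
    have hs : √((k : ℝ) + 1) ^ 2 = k + 1 := Real.sq_sqrt (by positivity)
    have : √((k : ℝ) + 1) ≠ 0 := by positivity
    rw [Nat.add_sub_cancel, hermiteFun_eq, hermiteNormConst_succ]
    push_cast
    field_simp
    rw [hs]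

/-- At `k = 0` the truncated index `k - 1 = 0` is harmless, being multiplied by `√0 = 0`. -/
theorem sqrt_succ_mul_hermiteFun_succ (k : ℕ) (x : ℝ) :
    √(k + 1) * hermiteFun (k + 1) x = x * hermiteFun k x - √k * hermiteFun (k - 1) x := by
  rw [sqrt_succ_mul_hermiteFun_succ_eq, sqrt_mul_hermiteFun_pred_eq, hermiteFun_eq,
    aeval_hermite_succ]
  ring

theorem hasDerivAt_hermiteFun (k : ℕ) (x : ℝ) :
    HasDerivAt (hermiteFun k) (√k * hermiteFun (k - 1) x - x / 2 * hermiteFun k x) x := by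
  have hexp : HasDerivAt (fun y : ℝ => Real.exp (-y ^ 2 / 4)) (-x / 2 * Real.exp (-x ^ 2 / 4)) x :=
    ((hasDerivAt_pow 2 x).neg.div_const 4).exp.congr_deriv
      (by simp only [Pi.neg_apply]; push_cast; ring)
  refine (((hasDerivAt_aeval_hermite k x).mul hexp).div_const (hermiteNormConst k)).congr_deriv ?_
  rw [sqrt_mul_hermiteFun_pred_eq, hermiteFun_eq]
  ring

theorem deriv_hermiteFun (k : ℕ) :
    deriv (hermiteFun k) = fun x => √k * hermiteFun (k - 1) x - x / 2 * hermiteFun k x :=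
  funext fun x => (hasDerivAt_hermiteFun k x).deriv

theorem continuous_hermiteFun (k : ℕ) : Continuous (hermiteFun k) :=
  continuous_iff_continuousAt.2 fun x => (hasDerivAt_hermiteFun k x).continuousAt

theorem continuous_deriv_hermiteFun (k : ℕ) : Continuous (deriv (hermiteFun k)) := by
  rw [deriv_hermiteFun]
  have := continuous_hermiteFun
  fun_prop

theorem hasDerivAt_deriv_hermiteFun (k : ℕ) (x : ℝ) :
    HasDerivAt (deriv (hermiteFun k)) (-((k + 1 / 2 - x ^ 2 / 4) * hermiteFun k x)) x := by
  rw [deriv_hermiteFun]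
  refine (((hasDerivAt_hermiteFun (k - 1) x).const_mul √k).sub
    (((hasDerivAt_id x).div_const 2).mul (hasDerivAt_hermiteFun k x))).congr_deriv ?_
  cases k with
  | zero => simp only [Nat.cast_zero, Real.sqrt_zero, zero_mul, zero_sub, id]; ring
  | succ k =>
    have hs : √((k : ℝ) + 1) ^ 2 = k + 1 := Real.sq_sqrt (by positivity)
    simp only [Nat.add_sub_cancel, Nat.cast_add, Nat.cast_one, id]
    linear_combination √((k : ℝ) + 1) * sqrt_succ_mul_hermiteFun_succ k x
      - hermiteFun (k + 1) x * hs

theorem integrable_hermiteFun_mul (j k : ℕ) :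
    Integrable fun x => hermiteFun j x * hermiteFun k x := by
  have h : ∀ x, hermiteFun j x * hermiteFun k x
      = ((hermite j * hermite k).map (algebraMap ℤ ℝ)).eval x * Real.exp (-(1 / 2) * x ^ 2)
        / (hermiteNormConst j * hermiteNormConst k) := by
    intro x
    rw [eval_map_algebraMap, map_mul, hermiteFun_eq, hermiteFun_eq,
      show -(1 / 2) * x ^ 2 = -x ^ 2 / 4 + -x ^ 2 / 4 by ring, Real.exp_add]
    ring
  simp_rw [h]
  exact (integrable_eval_mul_exp_neg_mul_sq _ (by norm_num)).div_const _

theorem integrable_hermiteFun_sq (k : ℕ) : Integrable fun x => hermiteFun k x ^ 2 := by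
  simpa only [sq] using integrable_hermiteFun_mul k k

theorem integral_hermiteFun_zero_sq : ∫ x, hermiteFun 0 x ^ 2 = 1 := by
  have h : ∀ x, hermiteFun 0 x ^ 2 = Real.exp (-(1 / 2) * x ^ 2) / √(2 * π) := by
    intro x
    rw [hermiteFun_eq, hermite_zero, aeval_C, map_one, one_mul, div_pow,
      hermiteNormConst_zero_sq, ← Real.exp_nat_mul]
    push_cast
    ring_nf
  simp_rw [h]
  rw [integral_div, integral_gaussian, div_eq_one_iff_eq (by positivity)]
  congr 1
  ring

/-- The ladder relations make `(ψ_k ψ_{k+1})' = √(k+1) (ψ_k² - ψ_{k+1}²)`, whose integral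
vanishes. -/
theorem integral_hermiteFun_sq (k : ℕ) : ∫ x, hermiteFun k x ^ 2 = 1 := by
  induction k with
  | zero => exact integral_hermiteFun_zero_sq
  | succ k ih =>
    have hderiv : ∀ x, HasDerivAt (fun y => hermiteFun k y * hermiteFun (k + 1) y)
        (√(k + 1) * (hermiteFun k x ^ 2 - hermiteFun (k + 1) x ^ 2)) x := by
      intro x
      refine ((hasDerivAt_hermiteFun k x).mul (hasDerivAt_hermiteFun (k + 1) x)).congr_deriv ?_
      simp only [Nat.add_sub_cancel, Nat.cast_add, Nat.cast_one]
      linear_combination hermiteFun (k + 1) x * sqrt_succ_mul_hermiteFun_succ k x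
    have hzero := integral_eq_zero_of_hasDerivAt_of_integrable hderiv
      (((integrable_hermiteFun_sq k).sub (integrable_hermiteFun_sq (k + 1))).const_mul _)
      (integrable_hermiteFun_mul k (k + 1))
    rw [integral_const_mul, integral_sub (integrable_hermiteFun_sq k)
      (integrable_hermiteFun_sq (k + 1)), ih] at hzero
    have : √((k : ℝ) + 1) ≠ 0 := by positivity
    exact (sub_eq_zero.1 ((mul_eq_zero.1 hzero).resolve_left this)).symm

theorem deriv_hermiteFun_sq_le (k : ℕ) (x : ℝ) :
    deriv (hermiteFun k) x ^ 2
      ≤ (k * hermiteFun (k - 1) x ^ 2 + (k + 1) * hermiteFun (k + 1) x ^ 2) / 2 := by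
  have hk : √(k : ℝ) ^ 2 = k := Real.sq_sqrt (by positivity)
  have hk1 : √((k : ℝ) + 1) ^ 2 = k + 1 := Real.sq_sqrt (by positivity)
  have h : deriv (hermiteFun k) x
      = (√k * hermiteFun (k - 1) x - √(k + 1) * hermiteFun (k + 1) x) / 2 := by
    rw [deriv_hermiteFun]
    linear_combination (1 / 2) * sqrt_succ_mul_hermiteFun_succ k x
  rw [h]
  linear_combination hermiteFun (k - 1) x ^ 2 / 2 * hk + hermiteFun (k + 1) x ^ 2 / 2 * hk1
    + sq_nonneg ((√k * hermiteFun (k - 1) x + √(k + 1) * hermiteFun (k + 1) x) / 2)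

theorem integrable_deriv_hermiteFun_sq (k : ℕ) :
    Integrable fun x => deriv (hermiteFun k) x ^ 2 := by
  have hg : Integrable fun x =>
      (k * hermiteFun (k - 1) x ^ 2 + (k + 1) * hermiteFun (k + 1) x ^ 2) / 2 :=
    (((integrable_hermiteFun_sq (k - 1)).const_mul _).add
      ((integrable_hermiteFun_sq (k + 1)).const_mul _)).div_const 2
  refine hg.mono' ((continuous_deriv_hermiteFun k).pow 2).aestronglyMeasurable
    (ae_of_all _ fun x => ?_)
  rw [Real.norm_of_nonneg (sq_nonneg _)]
  exact deriv_hermiteFun_sq_le k x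

theorem integral_deriv_hermiteFun_sq_le (k : ℕ) :
    ∫ x, deriv (hermiteFun k) x ^ 2 ≤ k + 1 / 2 := by
  have hg : Integrable fun x =>
      (k * hermiteFun (k - 1) x ^ 2 + (k + 1) * hermiteFun (k + 1) x ^ 2) / 2 :=
    (((integrable_hermiteFun_sq (k - 1)).const_mul _).add
      ((integrable_hermiteFun_sq (k + 1)).const_mul _)).div_const 2
  calc ∫ x, deriv (hermiteFun k) x ^ 2
      ≤ ∫ x, (k * hermiteFun (k - 1) x ^ 2 + (k + 1) * hermiteFun (k + 1) x ^ 2) / 2 :=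
        integral_mono (integrable_deriv_hermiteFun_sq k) hg (deriv_hermiteFun_sq_le k)
    _ = k + 1 / 2 := by
        rw [integral_div, integral_add ((integrable_hermiteFun_sq _).const_mul _)
          ((integrable_hermiteFun_sq _).const_mul _), integral_const_mul, integral_const_mul,
          integral_hermiteFun_sq, integral_hermiteFun_sq]
        ring

section Sonin

variable {f f' q q' : ℝ → ℝ}

/-- Sonin's function for `f'' = -q f` has derivative `-f'² q' / q²`. -/
theorem monotoneOn_sq_add_sq_div {s : Set ℝ} (hs : Convex ℝ s)
    (hf : ∀ y ∈ s, HasDerivAt f (f' y) y) (hf' : ∀ y ∈ s, HasDerivAt f' (-(q y * f y)) y)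
    (hq : ∀ y ∈ s, HasDerivAt q (q' y) y) (hq_pos : ∀ y ∈ s, 0 < q y)
    (hq' : ∀ y ∈ s, q' y ≤ 0) :
    MonotoneOn (fun y => f y ^ 2 + f' y ^ 2 / q y) s := by
  have hT : ∀ y ∈ s, HasDerivAt (fun y => f y ^ 2 + f' y ^ 2 / q y)
      (f' y ^ 2 * -q' y / q y ^ 2) y := fun y hy =>
    (((hf y hy).pow 2).add (((hf' y hy).pow 2).div (hq y hy) (hq_pos y hy).ne')).congr_deriv
      (by simp only [Pi.pow_apply]; field_simp [(hq_pos y hy).ne']; ring)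
  refine monotoneOn_of_hasDerivWithinAt_nonneg hs
    (fun y hy => (hT y hy).continuousAt.continuousWithinAt)
    (fun y hy => (hT y (interior_subset hy)).hasDerivWithinAt) fun y hy => ?_
  have : 0 ≤ -q' y := neg_nonneg.2 (hq' y (interior_subset hy))
  positivity

theorem mul_sq_add_sq_div_le_integral {x L a : ℝ} (hL : 0 ≤ L) (ha : 0 < a)
    (hf : ∀ y ∈ Icc x (x + L), HasDerivAt f (f' y) y)
    (hf' : ∀ y ∈ Icc x (x + L), HasDerivAt f' (-(q y * f y)) y)
    (hq : ∀ y ∈ Icc x (x + L), HasDerivAt q (q' y) y) (hqa : ∀ y ∈ Icc x (x + L), a ≤ q y)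
    (hq' : ∀ y ∈ Icc x (x + L), q' y ≤ 0)
    (hf2 : Integrable fun y => f y ^ 2) (hf'2 : Integrable fun y => f' y ^ 2) :
    L * (f x ^ 2 + f' x ^ 2 / q x) ≤ (∫ y, f y ^ 2) + (∫ y, f' y ^ 2) / a := by
  have hx : x ∈ Icc x (x + L) := ⟨le_rfl, by linarith⟩
  have hmono := monotoneOn_sq_add_sq_div (convex_Icc x (x + L)) hf hf' hq
    (fun y hy => ha.trans_le (hqa y hy)) hq'
  have hg : Integrable fun y => f y ^ 2 + f' y ^ 2 / a := hf2.add (hf'2.div_const a)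
  calc L * (f x ^ 2 + f' x ^ 2 / q x)
      = ∫ _ in Icc x (x + L), (f x ^ 2 + f' x ^ 2 / q x) := by
        rw [setIntegral_const, Real.volume_real_Icc_of_le (by linarith), smul_eq_mul,
          add_sub_cancel_left]
    _ ≤ ∫ y in Icc x (x + L), (f y ^ 2 + f' y ^ 2 / a) := by
        refine setIntegral_mono_on (integrableOn_const measure_Icc_lt_top.ne) hg.integrableOn
          measurableSet_Icc fun y hy => (hmono hx hy hy.1).trans ?_
        show f y ^ 2 + f' y ^ 2 / q y ≤ f y ^ 2 + f' y ^ 2 / a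
        gcongr
        exact hqa y hy
    _ ≤ ∫ y, (f y ^ 2 + f' y ^ 2 / a) :=
        setIntegral_le_integral hg (ae_of_all _ fun y => by positivity)
    _ = (∫ y, f y ^ 2) + (∫ y, f' y ^ 2) / a := by rw [integral_add hf2 (hf'2.div_const a),
        integral_div]

end Sonin

/-- For `x < 0` the energy estimate is run on `y ↦ ψ_k (-y)`, which solves the same Hermite
equation. -/
theorem hermiteFun_energy_le (k : ℕ) {x L a : ℝ} (hL : 0 ≤ L) (ha : 0 < a)
    (hqa : ∀ y ∈ Icc |x| (|x| + L), a ≤ k + 1 / 2 - y ^ 2 / 4) :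
    L * (hermiteFun k x ^ 2 + deriv (hermiteFun k) x ^ 2 / (k + 1 / 2 - x ^ 2 / 4))
      ≤ 1 + (k + 1 / 2) / a := by
  obtain ⟨s, hs, hsx⟩ : ∃ s : ℝ, |s| = 1 ∧ s * x = |x| := by
    rcases le_total 0 x with h | h
    · exact ⟨1, abs_one, by rw [one_mul, abs_of_nonneg h]⟩
    · exact ⟨-1, by simp, by rw [abs_of_nonpos h]; ring⟩
  have hs2 : s ^ 2 = 1 := by rw [← sq_abs, hs, one_pow]
  have hs0 : s ≠ 0 := by rintro rfl; simp at hs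
  have hf : ∀ y : ℝ, HasDerivAt (fun y => hermiteFun k (s * y))
      (s * deriv (hermiteFun k) (s * y)) y := fun y =>
    ((hasDerivAt_hermiteFun k _).differentiableAt.hasDerivAt.comp y
      ((hasDerivAt_id y).const_mul s)).congr_deriv (by simp [mul_comm])
  have hf' : ∀ y : ℝ, HasDerivAt (fun y => s * deriv (hermiteFun k) (s * y))
      (-((k + 1 / 2 - y ^ 2 / 4) * hermiteFun k (s * y))) y := fun y =>
    (((hasDerivAt_deriv_hermiteFun k _).comp y
      ((hasDerivAt_id y).const_mul s)).const_mul s).congr_deriv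
      (by
        simp only [id, mul_one]
        linear_combination (y ^ 2 * (s ^ 2 + 1) / 4 - (k + 1 / 2)) * hermiteFun k (s * y) * hs2)
  have hq : ∀ y : ℝ, HasDerivAt (fun y : ℝ => k + 1 / 2 - y ^ 2 / 4) (-(y / 2)) y := fun y =>
    (((hasDerivAt_pow 2 y).div_const 4).const_sub _).congr_deriv (by push_cast; ring)
  have hderiv_sq : ∀ y, (s * deriv (hermiteFun k) (s * y)) ^ 2 = deriv (hermiteFun k) (s * y) ^ 2 :=
    fun y => by linear_combination deriv (hermiteFun k) (s * y) ^ 2 * hs2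
  have key := mul_sq_add_sq_div_le_integral (x := |x|) hL ha (fun y _ => hf y) (fun y _ => hf' y)
    (fun y _ => hq y) hqa (fun y hy => by linarith [abs_nonneg x, hy.1])
    ((integrable_hermiteFun_sq k).comp_mul_left' hs0)
    (by simpa only [hderiv_sq] using (integrable_deriv_hermiteFun_sq k).comp_mul_left' hs0)
  simp only [hderiv_sq, Measure.integral_comp_mul_left (fun y => hermiteFun k y ^ 2),
    Measure.integral_comp_mul_left (fun y => deriv (hermiteFun k) y ^ 2), abs_inv, hs, inv_one,
    one_smul, integral_hermiteFun_sq, ← hsx, ← mul_assoc, ← sq, hs2, one_mul] at key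
  rw [mul_pow, mul_pow, hs2, one_mul, one_mul] at key
  refine key.trans ?_
  gcongr
  exact integral_deriv_hermiteFun_sq_le k

/-- In the bulk `|x| ≤ m √n` with `m < r < 2`, the window `[|x|, |x| + (r - m) √n]` stays where
`k + 1/2 - y²/4 ≥ (1 - r²/4) n / 2` for `k ≥ n - 1`, once `(1 - r²/4) n ≥ 1`. -/
theorem hermiteFun_energy_le_of_bulk {m r : ℝ} (hmr : m < r) {n k : ℕ}
    (hk : n ≤ k + 1) (hn : 1 ≤ (1 - r ^ 2 / 4) * n) {x : ℝ} (hx : |x| ≤ m * √n) :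
    0 < (k + 1 / 2 - x ^ 2 / 4) ∧
      hermiteFun k x ^ 2 + deriv (hermiteFun k) x ^ 2 / (k + 1 / 2 - x ^ 2 / 4)
        ≤ (1 + (k + 1 / 2) / ((1 - r ^ 2 / 4) * n / 2)) / ((r - m) * √n) := by
  have hsn : 0 < √(n : ℝ) := Real.sqrt_pos.2 (by nlinarith [sq_nonneg r])
  have hk' : (n : ℝ) ≤ k + 1 := by exact_mod_cast hk
  have hq : ∀ y ∈ Icc |x| (|x| + (r - m) * √n),
      (1 - r ^ 2 / 4) * n / 2 ≤ k + 1 / 2 - y ^ 2 / 4 := by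
    intro y ⟨hy0, hy1⟩
    have hy : y ^ 2 ≤ r ^ 2 * n := by
      rw [← Real.sq_sqrt (Nat.cast_nonneg n), ← mul_pow]
      exact pow_le_pow_left₀ ((abs_nonneg x).trans hy0) (by nlinarith) 2
    nlinarith
  have hL : 0 ≤ (r - m) * √n := by nlinarith
  have ha : 0 < (1 - r ^ 2 / 4) * n / 2 := by linarith
  have hxq := hq |x| ⟨le_rfl, le_add_of_nonneg_right hL⟩
  rw [sq_abs] at hxq
  refine ⟨ha.trans_le hxq, ?_⟩
  rw [le_div_iff₀ (by nlinarith), mul_comm]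
  exact hermiteFun_energy_le k hL ha hq

/-- Bulk-scale bounds at `x` on the two Hermite functions `ψ_{n-1}`, `ψ_n` that enter the
Christoffel–Darboux formulas. -/
def HermiteBulkBound (C : ℝ) (n : ℕ) (x : ℝ) : Prop :=
  ∀ k, k ≤ n → n ≤ k + 1 → hermiteFun k x ^ 2 ≤ C / √n ∧ deriv (hermiteFun k) x ^ 2 ≤ C * √n

theorem hermiteFun_bulk_bound {m : ℝ} (hm0 : 0 ≤ m) (hm : m < 2) :
    ∃ C, 0 < C ∧ ∃ N : ℕ, ∀ n ≥ N, ∀ x, |x| ≤ m * √n → HermiteBulkBound C n x := by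
  obtain ⟨r, hmr, hr⟩ := exists_between hm
  have hα : 0 < 1 - r ^ 2 / 4 := by nlinarith
  have hC : 0 < (1 + 3 / (1 - r ^ 2 / 4)) / (r - m) := by have := sub_pos.2 hmr; positivity
  refine ⟨2 * ((1 + 3 / (1 - r ^ 2 / 4)) / (r - m)), by linarith,
    ⌈1 / (1 - r ^ 2 / 4)⌉₊ + 1, fun n hn x hx k hkn hnk => ?_⟩
  have hαn : 1 ≤ (1 - r ^ 2 / 4) * n := by
    have : 1 / (1 - r ^ 2 / 4) ≤ n :=
      (Nat.le_ceil _).trans (by exact_mod_cast Nat.le_of_succ_le hn)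
    rwa [div_le_iff₀ hα, mul_comm] at this
  have hn1 : (1 : ℝ) ≤ n := by exact_mod_cast Nat.one_le_of_lt hn
  have hkn' : (k : ℝ) ≤ n := by exact_mod_cast hkn
  have hsn : 0 < √(n : ℝ) := Real.sqrt_pos.2 (by linarith)
  obtain ⟨hq, hT⟩ := hermiteFun_energy_le_of_bulk hmr hnk hαn hx
  have hfrac : (k + 1 / 2) / ((1 - r ^ 2 / 4) * n / 2) ≤ 3 / (1 - r ^ 2 / 4) := by
    rw [div_le_div_iff₀ (by linarith) hα]
    nlinarith
  have hT' : hermiteFun k x ^ 2 + deriv (hermiteFun k) x ^ 2 / (k + 1 / 2 - x ^ 2 / 4)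
      ≤ (1 + 3 / (1 - r ^ 2 / 4)) / (r - m) / √n := by
    refine hT.trans ?_
    rw [div_div]
    gcongr
  have hψ := (le_add_of_nonneg_right (by positivity)).trans hT'
  refine ⟨hψ.trans (by gcongr; linarith), ?_⟩
  have hd := (le_add_of_nonneg_left (sq_nonneg _)).trans hT'
  rw [div_le_iff₀ hq] at hd
  calc deriv (hermiteFun k) x ^ 2
      ≤ (1 + 3 / (1 - r ^ 2 / 4)) / (r - m) / √n * (k + 1 / 2 - x ^ 2 / 4) := hd
    _ ≤ (1 + 3 / (1 - r ^ 2 / 4)) / (r - m) / √n * (2 * n) := by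
        gcongr; nlinarith [sq_nonneg x]
    _ = 2 * ((1 + 3 / (1 - r ^ 2 / 4)) / (r - m)) * (n / √n) := by ring
    _ = 2 * ((1 + 3 / (1 - r ^ 2 / 4)) / (r - m)) * √n := by rw [Real.div_sqrt]

theorem sub_mul_gueKernel (n : ℕ) (x y : ℝ) :
    (x - y) * gueKernel n x y
      = √n * (hermiteFun n x * hermiteFun (n - 1) y - hermiteFun (n - 1) x * hermiteFun n y) := by
  induction n with
  | zero => simp [gueKernel]
  | succ n ih =>
    rw [gueKernel, Finset.sum_range_succ, mul_add, ← gueKernel, ih, Nat.add_sub_cancel]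
    push_cast
    linear_combination hermiteFun n x * sqrt_succ_mul_hermiteFun_succ n y
      - hermiteFun n y * sqrt_succ_mul_hermiteFun_succ n x

/-- The confluent Christoffel–Darboux formula, obtained by differentiating the previous one
at `y = x`. -/
theorem gueKernel_self (n : ℕ) (x : ℝ) :
    gueKernel n x x = √n * (deriv (hermiteFun n) x * hermiteFun (n - 1) x
      - deriv (hermiteFun (n - 1)) x * hermiteFun n x) := by
  have hψ : ∀ k, HasDerivAt (hermiteFun k) (deriv (hermiteFun k) x) x := fun k =>
    (hasDerivAt_hermiteFun k x).differentiableAt.hasDerivAt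
  have hK : HasDerivAt (fun z => gueKernel n z x)
      (∑ k ∈ Finset.range n, deriv (hermiteFun k) x * hermiteFun k x) x :=
    HasDerivAt.fun_sum fun k _ => (hψ k).mul_const _
  have hL : HasDerivAt (fun z => (z - x) * gueKernel n z x) (gueKernel n x x) x := by
    simpa using ((hasDerivAt_id x).sub_const x).fun_mul hK
  simp_rw [sub_mul_gueKernel] at hL
  exact hL.unique ((((hψ n).mul_const _).sub ((hψ (n - 1)).mul_const _)).const_mul _)

theorem gueKernel_sq_le (n : ℕ) (x y : ℝ) :
    gueKernel n x y ^ 2 ≤ gueKernel n x x * gueKernel n y y := by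
  simpa only [gueKernel, sq] using
    Finset.sum_mul_sq_le_sq_mul_sq (Finset.range n) (hermiteFun · x) (hermiteFun · y)

theorem gueKernel_self_nonneg (n : ℕ) (x : ℝ) : 0 ≤ gueKernel n x x :=
  Finset.sum_nonneg fun _ _ => mul_self_nonneg _

theorem abs_mul_le_of_sq_le {a b A B c : ℝ} (ha : a ^ 2 ≤ A) (hb : b ^ 2 ≤ B) (hc : 0 ≤ c)
    (hABc : A * B ≤ c ^ 2) : |a * b| ≤ c :=
  abs_le_of_sq_le_sq ((mul_pow a b 2).trans_le
    ((mul_le_mul ha hb (sq_nonneg b) ((sq_nonneg a).trans ha)).trans hABc)) hc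

section KernelBounds

variable {n : ℕ} {C : ℝ}

theorem abs_gueKernel_self_le {x : ℝ} (hC : 0 ≤ C) (h : HermiteBulkBound C n x) :
    |gueKernel n x x| ≤ 2 * C * √n := by
  have hprod : C * √n * (C / √n) ≤ C ^ 2 :=
    calc C * √n * (C / √n) = C ^ 2 * (√n / √n) := by ring
      _ ≤ C ^ 2 := mul_le_of_le_one_right (sq_nonneg C) (div_self_le_one _)
  have h1 := abs_mul_le_of_sq_le (h n le_rfl (by omega)).2 (h (n - 1) (by omega) (by omega)).1
    hC hprod
  have h2 := abs_mul_le_of_sq_le (h (n - 1) (by omega) (by omega)).2 (h n le_rfl (by omega)).1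
    hC hprod
  rw [gueKernel_self, abs_mul, abs_of_nonneg (Real.sqrt_nonneg _)]
  calc √n * |deriv (hermiteFun n) x * hermiteFun (n - 1) x
        - deriv (hermiteFun (n - 1)) x * hermiteFun n x|
      ≤ √n * (C + C) := by gcongr; exact (abs_sub _ _).trans (add_le_add h1 h2)
    _ = 2 * C * √n := by ring

theorem abs_sub_mul_gueKernel_le {x y : ℝ} (hC : 0 ≤ C) (hx : HermiteBulkBound C n x)
    (hy : HermiteBulkBound C n y) : |(x - y) * gueKernel n x y| ≤ 2 * C := by
  have hc : 0 ≤ C / √n := by positivity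
  have h1 := abs_mul_le_of_sq_le (hx n le_rfl (by omega)).1 (hy (n - 1) (by omega) (by omega)).1
    hc (sq _).ge
  have h2 := abs_mul_le_of_sq_le (hx (n - 1) (by omega) (by omega)).1 (hy n le_rfl (by omega)).1
    hc (sq _).ge
  rw [sub_mul_gueKernel, abs_mul, abs_of_nonneg (Real.sqrt_nonneg _)]
  calc √n * |hermiteFun n x * hermiteFun (n - 1) y - hermiteFun (n - 1) x * hermiteFun n y|
      ≤ √n * (C / √n + C / √n) := by gcongr; exact (abs_sub _ _).trans (add_le_add h1 h2)
    _ = 2 * C * (√n / √n) := by ring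
    _ ≤ 2 * C := mul_le_of_le_one_right (by positivity) (div_self_le_one _)

theorem gueKernel_bound_of_hermiteBulkBound {x y : ℝ} (hC : 0 ≤ C) (hx : HermiteBulkBound C n x)
    (hy : HermiteBulkBound C n y) :
    |gueKernel n x y| ≤ 2 * C * √n ∧ |x - y| * |gueKernel n x y| ≤ 2 * C := by
  refine ⟨abs_le_of_sq_le_sq ?_ (by positivity),
    abs_mul (x - y) _ ▸ abs_sub_mul_gueKernel_le hC hx hy⟩
  calc gueKernel n x y ^ 2 ≤ gueKernel n x x * gueKernel n y y := gueKernel_sq_le n x y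
    _ ≤ (2 * C * √n) * (2 * C * √n) := by
        rw [← abs_of_nonneg (gueKernel_self_nonneg n x),
          ← abs_of_nonneg (gueKernel_self_nonneg n y)]
        exact mul_le_mul (abs_gueKernel_self_le hC hx) (abs_gueKernel_self_le hC hy) (abs_nonneg _)
          (by positivity)
    _ = (2 * C * √n) ^ 2 := (sq _).symm

end KernelBounds

theorem continuous_gueKernel (n : ℕ) : Continuous fun p : ℝ × ℝ => gueKernel n p.1 p.2 :=
  continuous_finsetSum _ fun k _ =>
    ((continuous_hermiteFun k).comp continuous_fst).mul
      ((continuous_hermiteFun k).comp continuous_snd)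

/-- Finitely many kernels, bounded at once as one continuous map into `Fin N → ℝ` with the sup
norm. -/
theorem exists_abs_gueKernel_le (N : ℕ) (R : ℝ) :
    ∃ B, ∀ n < N, ∀ x y, |x| ≤ R → |y| ≤ R → |gueKernel n x y| ≤ B := by
  obtain ⟨B, hB⟩ := (isCompact_Icc.prod isCompact_Icc).exists_bound_of_continuousOn
    (continuous_pi fun n : Fin N => continuous_gueKernel n).continuousOn
      (s := Icc (-R) R ×ˢ Icc (-R) R)
  exact ⟨B, fun n hn x y hx hy =>
    (norm_le_pi_norm _ ⟨n, hn⟩).trans (hB (x, y) ⟨abs_le.1 hx, abs_le.1 hy⟩)⟩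

theorem gueKernel_bound_of_abs_le {m : ℝ} (hm0 : 0 ≤ m) (hm : m < 2) :
    ∃ C, 0 < C ∧ ∀ n : ℕ, 1 ≤ n → ∀ x y, |x| ≤ m * √n → |y| ≤ m * √n →
      |gueKernel n x y| ≤ C * √n ∧ |x - y| * |gueKernel n x y| ≤ C := by
  obtain ⟨C, hC, N, hbulk⟩ := hermiteFun_bulk_bound hm0 hm
  obtain ⟨B, hB⟩ := exists_abs_gueKernel_le N (m * √N)
  have hB' : 0 ≤ |B| * (2 * m * √N) := by positivity
  refine ⟨2 * C + |B| + |B| * (2 * m * √N), by positivity, fun n hn x y hx hy => ?_⟩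
  have hsn : 1 ≤ √(n : ℝ) := Real.one_le_sqrt.2 (by exact_mod_cast hn)
  rcases lt_or_ge n N with hnN | hnN
  · have hsnN : m * √n ≤ m * √N := by gcongr
    have hK := (hB n hnN x y (hx.trans hsnN) (hy.trans hsnN)).trans (le_abs_self B)
    have hxy : |x - y| ≤ 2 * m * √N := by linarith [abs_sub x y, hx.trans hsnN, hy.trans hsnN]
    have hxyK := mul_le_mul hxy hK (abs_nonneg _) (by positivity)
    rw [mul_comm _ |B|] at hxyK
    exact ⟨(by linarith : _ ≤ 2 * C + |B| + |B| * (2 * m * √N)).trans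
      (le_mul_of_one_le_right (by positivity) hsn), by linarith [abs_nonneg B]⟩
  · obtain ⟨h1, h2⟩ := gueKernel_bound_of_hermiteBulkBound hC.le (hbulk n hnN x hx)
      (hbulk n hnN y hy)
    exact ⟨h1.trans (by gcongr; linarith [abs_nonneg B]), by linarith [abs_nonneg B]⟩

theorem gueKernel_bulk_bound_general (E : ℝ) (δ : ℝ) (hδ : 0 < δ)
    (hδE : Set.Icc (E - δ) (E + δ) ⊆ Set.Ioo (-2 : ℝ) 2) :
    ∃ C : ℝ, 0 < C ∧ ∀ (n : ℕ), 1 ≤ n → ∀ x y : ℝ,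
      x ∈ Set.Icc ((E - δ) * Real.sqrt n) ((E + δ) * Real.sqrt n) →
      y ∈ Set.Icc ((E - δ) * Real.sqrt n) ((E + δ) * Real.sqrt n) →
      |gueKernel n x y| ≤ C * Real.sqrt n ∧
        (x ≠ y → |gueKernel n x y| ≤ C / |x - y|) := by
  have hm : max |E - δ| |E + δ| < 2 :=
    max_lt (abs_lt.2 (hδE ⟨le_rfl, by linarith⟩)) (abs_lt.2 (hδE ⟨by linarith, le_rfl⟩))
  obtain ⟨C, hC, hK⟩ := gueKernel_bound_of_abs_le (le_max_of_le_left (abs_nonneg _)) hm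
  have habs : ∀ n : ℕ, ∀ z ∈ Icc ((E - δ) * √n) ((E + δ) * √n), |z| ≤ max |E - δ| |E + δ| * √n :=
    fun n z hz => by
      simpa only [abs_mul, abs_of_nonneg (Real.sqrt_nonneg _), max_mul_of_nonneg _ _
        (Real.sqrt_nonneg _)] using abs_le_max_abs_abs hz.1 hz.2
  refine ⟨C, hC, fun n hn x y hx hy => ?_⟩
  obtain ⟨h1, h2⟩ := hK n hn x y (habs n x hx) (habs n y hy)
  exact ⟨h1, fun hxy => (le_div_iff₀ (abs_pos.2 (sub_ne_zero.2 hxy))).2 (by rwa [mul_comm])⟩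

/-- **Bulk bound on the GUE kernel.** Fix `E ∈ (−2,2)` and `δ > 0` with
`[E−δ, E+δ] ⊂ (−2,2)`. Then there is `C > 0` (depending only on `E`, `δ`) such that for
all `n ≥ 1` and all `x, y ∈ [(E−δ)√n, (E+δ)√n]`: `|K_n(x,y)| ≤ C√n`, and if moreover
`x ≠ y` then `|K_n(x,y)| ≤ C/|x−y|`. -/
theorem gueKernel_bulk_bound (E : ℝ) (hE : E ∈ Set.Ioo (-2 : ℝ) 2) (δ : ℝ) (hδ : 0 < δ)
    (hδE : Set.Icc (E - δ) (E + δ) ⊆ Set.Ioo (-2 : ℝ) 2) :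
    ∃ C : ℝ, 0 < C ∧ ∀ (n : ℕ), 1 ≤ n → ∀ x y : ℝ,
      x ∈ Set.Icc ((E - δ) * Real.sqrt n) ((E + δ) * Real.sqrt n) →
      y ∈ Set.Icc ((E - δ) * Real.sqrt n) ((E + δ) * Real.sqrt n) →
      |gueKernel n x y| ≤ C * Real.sqrt n ∧
        (x ≠ y → |gueKernel n x y| ≤ C / |x - y|) :=
  gueKernel_bulk_bound_general E δ hδ hδE
end
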